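/- arXiv:math/9912234 — 2 statements merged into one kernel-verified Lean document; each statement's English description precedes it below -/
import Mathlib

section
/- A graph G is square-stable if and only if there exists a maximum stable set S₀ of G such that every stable set A of G disjoint from S₀ can be uniquely matched into S₀, i.e., there is a unique matching M ⊆ (A, S₀) saturating all vertices of A. -/
open SimpleGraph

attribute [local instance] Classical.propDecidable

variable {V : Type*}

/-- A stable (independent) set: pairwise non-adjacent vertices. -/
def IsStable (G : SimpleGraph V) (S : Finset V) : Prop :=
  ∀ ⦃a⦄, a ∈ S → ∀ ⦃b⦄, b ∈ S → ¬ G.Adj a b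

/-- The stability (independence) number α(G). -/
noncomputable def alpha [Fintype V] (G : SimpleGraph V) : ℕ :=
  (Finset.univ.powerset.filter (fun S => IsStable G S)).sup Finset.card

/-- A maximum stable set, i.e. a member of Ω(G). -/
def IsMaxStable [Fintype V] (G : SimpleGraph V) (S : Finset V) : Prop :=
  IsStable G S ∧ S.card = alpha G

/-- The square G² of a graph: distinct vertices adjacent iff at distance ≤ 2. -/
def square (G : SimpleGraph V) : SimpleGraph V where
  Adj u v := u ≠ v ∧ (G.Adj u v ∨ ∃ w, G.Adj u w ∧ G.Adj w v)
  symm := by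
    constructor
    rintro u v ⟨h, h2⟩
    refine ⟨h.symm, ?_⟩
    rcases h2 with h2 | ⟨w, hw1, hw2⟩
    · exact Or.inl h2.symm
    · exact Or.inr ⟨w, hw2.symm, hw1.symm⟩
  loopless := by constructor; rintro u ⟨h, _⟩; exact h rfl

/-- G is α-square-stable if α(G) = α(G²). -/
def SquareStable [Fintype V] (G : SimpleGraph V) : Prop :=
  alpha G = alpha (square G)

/-- The maximum matching size μ(G). -/
noncomputable def mu [Fintype V] (G : SimpleGraph V) : ℕ :=
  sSup {n | ∃ M : G.Subgraph, M.IsMatching ∧ M.verts.ncard = 2 * n}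

/-- f realizes a matching of A into S: it sends each a ∈ A to a distinct
neighbour in S (so the corresponding edges form a matching ⊆ (A,S) saturating A). -/
def MatchedInto (G : SimpleGraph V) (A S : Finset V) (f : V → V) : Prop :=
  (∀ a ∈ A, f a ∈ S ∧ G.Adj a (f a)) ∧ ∀ a ∈ A, ∀ b ∈ A, f a = f b → a = b

/-- Well-covered: no isolated vertices, and every maximal stable set is maximum. -/
def WellCovered [Fintype V] (G : SimpleGraph V) : Prop :=
  (∀ v : V, ∃ w, G.Adj v w) ∧
    ∀ S : Finset V, IsStable G S → (∀ T : Finset V, IsStable G T → S ⊆ T → S = T) →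
      S.card = alpha G

/-- Very well-covered: well-covered and |V(G)| = 2α(G). -/
def VeryWellCovered [Fintype V] (G : SimpleGraph V) : Prop :=
  WellCovered G ∧ Fintype.card V = 2 * alpha G

/-- The set of pendant (degree-one) vertices of G. -/
noncomputable def pendants [Fintype V] (G : SimpleGraph V) : Finset V :=
  Finset.univ.filter (fun v => G.degree v = 1)

/-- G has a perfect matching consisting of pendant edges. -/
def HasPendantPerfectMatching [Fintype V] (G : SimpleGraph V) : Prop :=
  ∃ M : G.Subgraph, M.IsPerfectMatching ∧
    ∀ a b : V, M.Adj a b → G.degree a = 1 ∨ G.degree b = 1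

/-- The star K_{1,n}: vertex 0 is the center, adjacent to n leaves. -/
def starGraph (n : ℕ) : SimpleGraph (Fin (n + 1)) where
  Adj u v := u ≠ v ∧ (u = 0 ∨ v = 0)
  symm := by constructor; rintro u v ⟨h1, h2⟩; exact ⟨h1.symm, h2.symm⟩
  loopless := by constructor; rintro u ⟨h, _⟩; exact h rfl

/-!
A set is stable in `G²` exactly when it is stable in `G` and every vertex has at most one
neighbour in it, and always `α(G²) ≤ α(G)`. So `G` is square-stable iff some maximum stable
set `S₀` of `G` has this property. The exchange argument — for a maximum stable set `S₀` and a
stable `A` disjoint from it, `A ∪ (S₀ \ N(A))` is stable, so `|A| ≤ |N(A) ∩ S₀|` — shows that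
every vertex outside `S₀` has a neighbour in `S₀` and that no two vertices of a stable `A` share
their only neighbour in `S₀`; matching each vertex of `A` to its unique neighbour in `S₀` is then
the unique matching. Conversely, a vertex with two neighbours `s ≠ t` in `S₀` could be matched
into `S₀` both via `s` and via `t`.
-/

namespace IsStable

variable {G : SimpleGraph V}

lemma card_le_alpha [Fintype V] {S : Finset V} (hS : IsStable G S) : S.card ≤ alpha G :=
  Finset.le_sup (f := Finset.card) (by simpa using hS)

lemma singleton (v : V) : IsStable G {v} := by
  simp [IsStable]

lemma mono {S T : Finset V} (hT : IsStable G T) (hST : S ⊆ T) : IsStable G S :=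
  fun _ ha _ hb => hT (hST ha) (hST hb)

lemma of_square {S : Finset V} (hS : IsStable (square G) S) : IsStable G S :=
  fun _ ha _ hb hab => hS ha hb ⟨G.ne_of_adj hab, Or.inl hab⟩

end IsStable

lemma exists_isMaxStable [Fintype V] (G : SimpleGraph V) : ∃ S, IsMaxStable G S := by
  obtain ⟨S, hS, hcard⟩ := Finset.exists_mem_eq_sup
    (Finset.univ.powerset.filter (fun S => IsStable G S)) ⟨∅, by simp [IsStable]⟩ Finset.card
  exact ⟨S, (Finset.mem_filter.1 hS).2, hcard.symm⟩

lemma alpha_square_le [Fintype V] (G : SimpleGraph V) : alpha (square G) ≤ alpha G := by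
  obtain ⟨S, hS, hcard⟩ := exists_isMaxStable (square G)
  exact hcard ▸ hS.of_square.card_le_alpha

lemma isStable_square_iff {G : SimpleGraph V} {S : Finset V} :
    IsStable (square G) S ↔
      IsStable G S ∧ ∀ v, ∀ s ∈ S, ∀ t ∈ S, G.Adj v s → G.Adj v t → s = t := by
  refine ⟨fun hS => ⟨hS.of_square, fun v s hs t ht hvs hvt => ?_⟩, ?_⟩
  · by_contra hst
    exact hS hs ht ⟨hst, Or.inr ⟨v, hvs.symm, hvt⟩⟩
  · rintro ⟨hS, huniq⟩ s hs t ht ⟨hst, hadj | ⟨v, hsv, hvt⟩⟩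
    · exact hS hs ht hadj
    · exact hst (huniq v s hs t ht hsv.symm hvt)

namespace IsMaxStable

variable [Fintype V] {G : SimpleGraph V} {S : Finset V}

lemma card_le_card_adj_filter (hS : IsMaxStable G S) {A : Finset V} (hA : IsStable G A)
    (hAS : Disjoint A S) : A.card ≤ (S.filter fun s => ∃ a ∈ A, G.Adj a s).card := by
  set N := S.filter fun s => ∃ a ∈ A, G.Adj a s
  have hexchange : IsStable G (A ∪ (S \ N)) := by
    intro x hx y hy hxy
    simp only [Finset.mem_union, Finset.mem_sdiff, N, Finset.mem_filter, not_and] at hx hy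
    rcases hx with hx | ⟨hxS, hxN⟩ <;> rcases hy with hy | ⟨hyS, hyN⟩
    · exact hA hx hy hxy
    · exact hyN hyS ⟨x, hx, hxy⟩
    · exact hxN hxS ⟨y, hy, hxy.symm⟩
    · exact hS.1 hxS hyS hxy
  have hcard := hexchange.card_le_alpha
  have hNS : N ⊆ S := Finset.filter_subset _ _
  rw [Finset.card_union_of_disjoint (hAS.mono_right Finset.sdiff_subset),
    Finset.card_sdiff_of_subset hNS, ← hS.2] at hcard
  have := Finset.card_le_card hNS
  omega

lemma exists_adj_of_notMem (hS : IsMaxStable G S) {a : V} (ha : a ∉ S) : ∃ s ∈ S, G.Adj a s := by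
  have h := hS.card_le_card_adj_filter (IsStable.singleton a) (Finset.disjoint_singleton_left.2 ha)
  obtain ⟨s, hs⟩ := Finset.card_pos.1 (by simpa using h)
  exact ⟨s, Finset.mem_filter.1 hs⟩

lemma eq_of_adj_of_adj (hS : IsMaxStable G S)
    (huniq : ∀ v, ∀ s ∈ S, ∀ t ∈ S, G.Adj v s → G.Adj v t → s = t)
    {A : Finset V} (hA : IsStable G A) (hAS : Disjoint A S) {a b s : V} (ha : a ∈ A) (hb : b ∈ A)
    (hs : s ∈ S) (has : G.Adj a s) (hbs : G.Adj b s) : a = b := by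
  by_contra hab
  have hpair : {a, b} ⊆ A := Finset.insert_subset ha (Finset.singleton_subset_iff.2 hb)
  have hsub : (S.filter fun t => ∃ x ∈ ({a, b} : Finset V), G.Adj x t) ⊆ {s} := by
    intro t ht
    simp only [Finset.mem_filter, Finset.mem_insert, Finset.mem_singleton, exists_eq_or_imp,
      exists_eq_left] at ht
    rcases ht with ⟨ht, hat | hbt⟩
    · exact Finset.mem_singleton.2 (huniq a t ht s hs hat has)
    · exact Finset.mem_singleton.2 (huniq b t ht s hs hbt hbs)
  have := calc
    2 = ({a, b} : Finset V).card := (Finset.card_pair hab).symm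
    _ ≤ (S.filter fun t => ∃ x ∈ ({a, b} : Finset V), G.Adj x t).card :=
      hS.card_le_card_adj_filter (hA.mono hpair) (hAS.mono_left hpair)
    _ ≤ ({s} : Finset V).card := Finset.card_le_card hsub
    _ = 1 := Finset.card_singleton s
  omega

lemma exists_unique_matchedInto (hS : IsMaxStable G S)
    (huniq : ∀ v, ∀ s ∈ S, ∀ t ∈ S, G.Adj v s → G.Adj v t → s = t)
    {A : Finset V} (hA : IsStable G A) (hAS : Disjoint A S) :
    ∃ f : V → V, MatchedInto G A S f ∧ ∀ g : V → V, MatchedInto G A S g → ∀ a ∈ A, g a = f a := by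
  choose! f hfS hfadj using fun a (ha : a ∉ S) => hS.exists_adj_of_notMem ha
  have hA_out : ∀ a ∈ A, a ∉ S := fun a ha => Finset.disjoint_left.1 hAS ha
  have hf : MatchedInto G A S f :=
    ⟨fun a ha => ⟨hfS a (hA_out a ha), hfadj a (hA_out a ha)⟩, fun a ha b hb hfab =>
      hS.eq_of_adj_of_adj huniq hA hAS ha hb (hfS a (hA_out a ha)) (hfadj a (hA_out a ha))
        (hfab ▸ hfadj b (hA_out b hb))⟩
  refine ⟨f, hf, fun g hg a ha => ?_⟩
  exact huniq a _ (hg.1 a ha).1 _ (hf.1 a ha).1 (hg.1 a ha).2 (hf.1 a ha).2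

end IsMaxStable

lemma matchedInto_singleton {G : SimpleGraph V} {S : Finset V} {v s : V} (hs : s ∈ S)
    (hvs : G.Adj v s) : MatchedInto G {v} S fun _ => s :=
  ⟨by simpa using ⟨hs, hvs⟩, by simp⟩

/-- G is square-stable iff there is a maximum stable set S₀ such that every stable set A
disjoint from S₀ can be uniquely matched into S₀. -/
theorem stmt8 [Fintype V] (G : SimpleGraph V) :
    SquareStable G ↔
      ∃ S₀ : Finset V, IsMaxStable G S₀ ∧
        ∀ A : Finset V, IsStable G A → Disjoint A S₀ →
          ∃ f : V → V, MatchedInto G A S₀ f ∧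
            ∀ g : V → V, MatchedInto G A S₀ g → ∀ a ∈ A, g a = f a := by
  constructor
  · intro hsq
    obtain ⟨S₀, hS₀, hcard⟩ := exists_isMaxStable (square G)
    obtain ⟨hstable, huniq⟩ := isStable_square_iff.1 hS₀
    have hmax : IsMaxStable G S₀ := ⟨hstable, hcard.trans hsq.symm⟩
    exact ⟨S₀, hmax, fun A hA hAS => hmax.exists_unique_matchedInto huniq hA hAS⟩
  · rintro ⟨S₀, hmax, hmatch⟩
    have huniq : ∀ v, ∀ s ∈ S₀, ∀ t ∈ S₀, G.Adj v s → G.Adj v t → s = t := by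
      intro v s hs t ht hvs hvt
      have hv : v ∉ S₀ := fun hv => hmax.1 hv hs hvs
      obtain ⟨f, -, hf⟩ :=
        hmatch {v} (IsStable.singleton v) (Finset.disjoint_singleton_left.2 hv)
      have hfs := hf _ (matchedInto_singleton hs hvs) v (Finset.mem_singleton_self v)
      have hft := hf _ (matchedInto_singleton ht hvt) v (Finset.mem_singleton_self v)
      exact hfs.trans hft.symm
    have hsquare : IsStable (square G) S₀ := isStable_square_iff.2 ⟨hmax.1, huniq⟩
    exact le_antisymm (hmax.2 ▸ hsquare.card_le_alpha) (alpha_square_le G)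
end

section
/- If G is a square-stable König-Egerváry graph, then its square G² is also a König-Egerváry graph. -/
open SimpleGraph

attribute [local instance] Classical.propDecidable

variable {V : Type*}

/-!
A stable set meets each edge of a matching at most once, so `α(H) + μ(H) ≤ |V(H)|` for every
graph `H`. Since `G ≤ G²`, we get `μ(G) ≤ μ(G²)`; with `α(G) = α(G²)` this gives
`|V| = α(G) + μ(G) ≤ α(G²) + μ(G²) ≤ |V|`.
-/

open Finset

lemma le_square (G : SimpleGraph V) : G ≤ square G :=
  fun _ _ hab => ⟨hab.ne, Or.inl hab⟩

/-- Every vertex of `S` covered by `M` is matched to a vertex outside `S`, distinct ones to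
distinct ones. -/
lemma SimpleGraph.Subgraph.IsMatching.two_mul_card_inter_le {G : SimpleGraph V}
    {M : G.Subgraph} [Fintype M.verts] (hM : M.IsMatching) {S : Finset V} (hS : IsStable G S) :
    2 * #(M.verts.toFinset ∩ S) ≤ #M.verts.toFinset := by
  have hpartner : #(M.verts.toFinset ∩ S) ≤ #(M.verts.toFinset \ S) := by
    refine card_le_card_of_forall_subsingleton M.Adj (fun a ha => ?_)
      (fun b _ a₁ ha₁ a₂ ha₂ => hM.eq_of_adj_right ha₁.2 ha₂.2)
    obtain ⟨haM, haS⟩ := mem_inter.mp ha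
    obtain ⟨b, hab, -⟩ := hM (Set.mem_toFinset.mp haM)
    exact ⟨b, mem_sdiff.mpr ⟨Set.mem_toFinset.mpr (M.edge_vert hab.symm),
      fun hbS => hS haS hbS (M.adj_sub hab)⟩, hab⟩
  have := card_inter_add_card_sdiff M.verts.toFinset S
  omega

lemma IsStable.card_add_le [Fintype V] {G : SimpleGraph V} {S : Finset V} (hS : IsStable G S)
    {M : G.Subgraph} (hM : M.IsMatching) {k : ℕ} (hk : M.verts.ncard = 2 * k) :
    #S + k ≤ Fintype.card V := by
  rw [Set.ncard_eq_toFinset_card'] at hk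
  have hinter := hM.two_mul_card_inter_le hS
  have hunion := card_union_add_card_inter M.verts.toFinset S
  have := card_le_univ (M.verts.toFinset ∪ S)
  omega

section mu

variable (G : SimpleGraph V)

lemma nonempty_muSet :
    {n | ∃ M : G.Subgraph, M.IsMatching ∧ M.verts.ncard = 2 * n}.Nonempty :=
  ⟨0, ⊥, fun _ hv => hv.elim, by simp⟩

variable [Fintype V]

lemma bddAbove_muSet :
    BddAbove {n | ∃ M : G.Subgraph, M.IsMatching ∧ M.verts.ncard = 2 * n} := by
  refine ⟨Fintype.card V, fun n ⟨M, _, hn⟩ => ?_⟩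
  have := Set.ncard_le_ncard (Set.subset_univ M.verts)
  rw [Set.ncard_univ, Nat.card_eq_fintype_card] at this
  omega

lemma exists_isMatching_ncard_verts_eq_two_mul_mu :
    ∃ M : G.Subgraph, M.IsMatching ∧ M.verts.ncard = 2 * mu G :=
  Nat.sSup_mem (nonempty_muSet G) (bddAbove_muSet G)

lemma mu_mono {G H : SimpleGraph V} (hle : G ≤ H) : mu G ≤ mu H := by
  refine csSup_le_csSup (bddAbove_muSet H) (nonempty_muSet G) ?_
  rintro n ⟨M, hM, hn⟩
  exact ⟨M.map (Hom.ofLE hle), hM.map_ofLE hle, by simpa using hn⟩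

lemma alpha_add_mu_le : alpha G + mu G ≤ Fintype.card V := by
  obtain ⟨M, hM, hn⟩ := exists_isMatching_ncard_verts_eq_two_mul_mu G
  have hmu : mu G ≤ Fintype.card V := by
    simpa using IsStable.card_add_le (S := ∅) (fun _ ha => absurd ha (notMem_empty _)) hM hn
  have halpha : alpha G ≤ Fintype.card V - mu G :=
    Finset.sup_le fun S hS => Nat.le_sub_of_add_le ((mem_filter.mp hS).2.card_add_le hM hn)
  omega

end mu

/-- If G is a square-stable König-Egerváry graph, then G² is also König-Egerváry. -/
theorem stmt19 [Fintype V] (G : SimpleGraph V)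
    (hke : alpha G + mu G = Fintype.card V) (h : SquareStable G) :
    alpha (square G) + mu (square G) = Fintype.card V := by
  refine le_antisymm (alpha_add_mu_le (square G)) ?_
  calc Fintype.card V = alpha G + mu G := hke.symm
    _ ≤ alpha G + mu (square G) := Nat.add_le_add_left (mu_mono (le_square G)) _
    _ = alpha (square G) + mu (square G) := congrArg (· + _) h
end
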